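/- Define h_k : {0,1}^k → ℕ inductively by h_0 = 1 and h_{k+1}(σ, σ_{k+1}) = h_k(σ) + σ_{k+1} · h_k(1-σ). Then h_k(1-σ) ≤ (k+1) · h_k(σ) for every σ ∈ {0,1}^k. -/
import Mathlib


open Matrix

namespace Farey

/-- The canonical energy numerator of the number-theoretical spin chain:
`h 0 = 1`, `h (k+1) (σ, s) = h k σ + s * h k (1-σ)`. -/
def h : (k : ℕ) → (Fin k → Bool) → ℕ
  | 0, _ => 1
  | k + 1, σ =>
      h k (fun i => σ i.castSucc) +
        if σ (Fin.last k) then h k (fun i => !σ i.castSucc) else 0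

/-- `h_k(1-σ) ≤ (k+1) ⬝ h_k(σ)`. -/
theorem h_flip_le (k : ℕ) (σ : Fin k → Bool) :
    h k (fun i => !σ i) ≤ (k + 1) * h k σ := by
  induction k with
  | zero => simp [h]
  | succ k ih =>
    have ih1 := ih (fun i => σ i.castSucc)
    have ih2 := ih (fun i => !σ i.castSucc)
    simp only [Bool.not_not] at ih2
    simp only [h, Bool.not_eq_true']
    cases hs : σ (Fin.last k) <;> simp <;> nlinarith

end Farey
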